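/- arXiv:2510.19876 — 7 statements merged into one kernel-verified Lean document; each statement's English description precedes it below -/
import Mathlib

section
/- Let V be a vector space of dimension n over an algebraically closed field 𝕂, with 𝕂[V] = 𝕂[x₁,…,xₙ], and let g ∈ GL(V). If there exists an irreducible polynomial α in the maximal ideal 𝔪 = (x₁,…,xₙ) such that g·xᵢ − xᵢ lies in the principal ideal (α) for every coordinate function xᵢ (i = 1,…,n), then dim ker(g − E) ≥ n − 1, i.e., g is a pseudoreflection or the identity. -/
open MvPolynomial Matrix

/-- The action of `g ∈ GL_n(K)` on polynomials: `(g • f)(x) = f (g⁻¹ • x)`. -/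
noncomputable def polyAct {K : Type*} [Field K] {n : ℕ} (g : GL (Fin n) K) :
    MvPolynomial (Fin n) K →ₐ[K] MvPolynomial (Fin n) K :=
  aeval fun i => ∑ j, ((g⁻¹ : GL (Fin n) K) : Matrix (Fin n) (Fin n) K) i j • X j
/-- Dimension of the fixed space of a matrix. -/
noncomputable def fixedDim {K : Type*} [Field K] {n : ℕ} (g : Matrix (Fin n) (Fin n) K) : ℕ :=
  Module.finrank K (LinearMap.ker (Matrix.toLin' (g - 1)))

/-!
Reading off the coefficient of `x_k` in `g·xᵢ - xᵢ = α qᵢ` gives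
`(g⁻¹ - 1)ᵢₖ = qᵢ(0) · ∂α/∂x_k(0)`, because `α(0) = 0`. So `g⁻¹ - 1`, and with it
`g - 1 = -g (g⁻¹ - 1)`, has rank at most one, and rank–nullity bounds the fixed space of `g`
from below by `n - 1`.
-/

namespace MvPolynomial

variable {σ R : Type*} [CommSemiring R]

theorem constantCoeff_eq_zero_of_mem_span_range_X {p : MvPolynomial σ R}
    (hp : p ∈ Ideal.span (Set.range X)) : constantCoeff p = 0 :=
  RingHom.mem_ker.mp <| (Ideal.span_le (I := RingHom.ker constantCoeff)).mpr
    (Set.range_subset_iff.mpr fun i => RingHom.mem_ker.mpr (constantCoeff_X R i)) hp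

theorem coeff_single_one_mul_of_constantCoeff_eq_zero {p : MvPolynomial σ R}
    (hp : constantCoeff p = 0) (q : MvPolynomial σ R) (j : σ) :
    coeff (Finsupp.single j 1) (p * q) = coeff (Finsupp.single j 1) p * constantCoeff q := by
  classical
  rw [coeff_mul, Finsupp.antidiagonal_single,
    show (Finset.HasAntidiagonal.antidiagonal 1 : Finset (ℕ × ℕ)) = {(0, 1), (1, 0)} from rfl]
  simp [← constantCoeff_eq, hp]

theorem coeff_single_one_sum_smul_X [Fintype σ] (c : σ → R) (j : σ) :
    coeff (Finsupp.single j 1) (∑ k, c k • X k : MvPolynomial σ R) = c j := by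
  classical
  simp [coeff_sum, coeff_X, Finsupp.single_left_inj]

end MvPolynomial

section

variable {K : Type*} [Field K] {n : ℕ}

theorem polyAct_X (g : GL (Fin n) K) (i : Fin n) :
    polyAct g (X i) = ∑ j, ((g⁻¹ : GL (Fin n) K) : Matrix (Fin n) (Fin n) K) i j • X j := by
  simp [polyAct]

theorem coeff_single_one_polyAct_X_sub_X (g : GL (Fin n) K) (i k : Fin n) :
    coeff (Finsupp.single k 1) (polyAct g (X i) - X i)
      = (((g⁻¹ : GL (Fin n) K) : Matrix (Fin n) (Fin n) K) - 1) i k := by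
  rw [coeff_sub, polyAct_X, coeff_single_one_sum_smul_X, coeff_X, Matrix.sub_apply,
    Matrix.one_apply]
  simp [Finsupp.single_left_inj, eq_comm]

theorem fixedDim_add_rank_sub_one (M : Matrix (Fin n) (Fin n) K) :
    fixedDim M + (M - 1).rank = n := by
  rw [fixedDim, Matrix.rank, ← Matrix.toLin'_apply', add_comm,
    LinearMap.finrank_range_add_finrank_ker, Module.finrank_fin_fun]

end

theorem Matrix.GeneralLinearGroup.rank_inv_sub_one {K : Type*} [CommRing K] {n : Type*}
    [Fintype n] [DecidableEq n] (g : GL n K) :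
    (((g⁻¹ : GL n K) : Matrix n n K) - 1).rank = ((g : Matrix n n K) - 1).rank := by
  have hfactor :
      ((g⁻¹ : GL n K) : Matrix n n K) - 1 = ((-g⁻¹ : GL n K) : Matrix n n K) * (g - 1) := by
    simp [Matrix.mul_sub]
  rw [hfactor, rank_mul_eq_right_of_isUnit_det _ _ (isUnits_det_units _)]

theorem pseudoreflection_of_coords_general {K : Type*} [Field K] {n : ℕ}
    (g : GL (Fin n) K)
    (α : MvPolynomial (Fin n) K)
    (hα : α ∈ Ideal.span (Set.range (X : Fin n → MvPolynomial (Fin n) K)))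
    (h : ∀ i : Fin n, polyAct g (X i) - X i ∈ Ideal.span {α}) :
    n - 1 ≤ fixedDim ((g : Matrix (Fin n) (Fin n) K)) := by
  choose q hq using fun i => Ideal.mem_span_singleton.mp (h i)
  have hα0 : constantCoeff α = 0 := constantCoeff_eq_zero_of_mem_span_range_X hα
  have hinv : ((g⁻¹ : GL (Fin n) K) : Matrix (Fin n) (Fin n) K) - 1
      = vecMulVec (fun i => constantCoeff (q i)) (fun k => coeff (Finsupp.single k 1) α) := by
    ext i k
    rw [← coeff_single_one_polyAct_X_sub_X, hq,
      coeff_single_one_mul_of_constantCoeff_eq_zero hα0, vecMulVec_apply, mul_comm]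
  have hrank : ((g : Matrix (Fin n) (Fin n) K) - 1).rank ≤ 1 := by
    rw [← Matrix.GeneralLinearGroup.rank_inv_sub_one, hinv]
    exact rank_vecMulVec_le _ _
  have hdim := fixedDim_add_rank_sub_one (g : Matrix (Fin n) (Fin n) K)
  omega

/-- If `g·xᵢ - xᵢ ∈ (α)` for an irreducible `α` in the maximal ideal and
every coordinate `xᵢ`, then `g` fixes a hyperplane pointwise (pseudoreflection or identity). -/
theorem pseudoreflection_of_coords {K : Type*} [Field K] [IsAlgClosed K] {n : ℕ}
    (g : GL (Fin n) K)
    (α : MvPolynomial (Fin n) K) (hirr : Irreducible α)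
    (hα : α ∈ Ideal.span (Set.range (X : Fin n → MvPolynomial (Fin n) K)))
    (h : ∀ i : Fin n, polyAct g (X i) - X i ∈ Ideal.span {α}) :
    n - 1 ≤ fixedDim ((g : Matrix (Fin n) (Fin n) K)) :=
  pseudoreflection_of_coords_general g α hα h
end

section
/- Let W be a vector space of dimension n over an algebraically closed field 𝕂, let G ≤ GL(W) be a finite group, and let H be a normal subgroup of G such that the invariant ring R = 𝕂[W]^H is a polynomial algebra on n homogeneous generators (so that W/H ≅ 𝔸ⁿ). Since H is normal, each g ∈ G restricts to a 𝕂-algebra automorphism of R. If g ∈ G is a pseudoreflection of W, then the ideal of R generated by the set {g·f − f : f ∈ R} has height at most 1; equivalently, the fixed-point set of the induced automorphism of W/H ≅ 𝔸ⁿ contains the origin and has codimension at most 1. In particular, if G is generated by pseudoreflections, then the induced action of G/H on W/H is generated by such generalized pseudoreflections. -/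
open MvPolynomial Matrix

/-- The ring of invariants `K[W]^G`. -/
noncomputable def invariants {K : Type*} [Field K] {n : ℕ} (G : Subgroup (GL (Fin n) K)) :
    Subalgebra K (MvPolynomial (Fin n) K) :=
  ⨅ g ∈ G, AlgHom.equalizer (polyAct g) (AlgHom.id K (MvPolynomial (Fin n) K))

/-- An `R`-algebra is polynomial if it is generated by algebraically independent elements. -/
def IsPolynomialAlgebra (R A : Type*) [CommRing R] [CommRing A] [Algebra R A] : Prop :=
  ∃ (m : ℕ) (v : Fin m → A), AlgebraicIndependent R v ∧ Algebra.adjoin R (Set.range v) = ⊤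
/-- The height of an ideal: the infimum of the heights of the primes containing it. -/
noncomputable def idealHeight {R : Type*} [CommRing R] (I : Ideal R) : ℕ∞ :=
  ⨅ P ∈ {P : PrimeSpectrum R | I ≤ P.asIdeal}, Order.height P

/-!
If `g` fixes a hyperplane then `g⁻¹ - 1` has rank at most one, so a single linear form `ℓ`
divides `g • f - f` for every polynomial `f`. When `g • f - f` lies in `R = K[W]^H` it is also
divisible by every `h • ℓ`, so its `|H|`-th power is divisible by the orbit product
`N = ∏_{h ∈ H} h • ℓ`; this is an `H`-invariant with zero constant term, and the divisibility holds
in `R` since `R` is closed under exact division. Hence the ideal lies in the radical of `N R`, so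
in a minimal prime over it, which has height at most one by Krull's principal ideal theorem in
the Noetherian ring `R`.
-/

theorem Matrix.exists_eq_vecMulVec_of_rank_le_one {K m n : Type*} [Field K] [Fintype m]
    [Fintype n] [DecidableEq n] (B : Matrix m n K) (h : B.rank ≤ 1) :
    ∃ c : m → K, ∃ w : n → K, B = vecMulVec c w := by
  obtain ⟨c, hc⟩ := ((Submodule.finrank_le_one_iff_isPrincipal _).1 h).principal
  have hcol : ∀ j, ∃ a : K, a • c = fun i => B i j := by
    intro j
    rw [← Submodule.mem_span_singleton, ← hc]
    exact ⟨Pi.single j 1, by ext i; simp [mulVec_single]⟩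
  choose w hw using hcol
  refine ⟨c, w, ?_⟩
  ext i j
  rw [vecMulVec_apply, ← congrFun (hw j) i, Pi.smul_apply, smul_eq_mul, mul_comm]

section PolyAct

variable {K : Type*} [Field K] {n : ℕ}

theorem rank_inv_sub_one_le_one (g : GL (Fin n) K)
    (hg : n - 1 ≤ fixedDim (g : Matrix (Fin n) (Fin n) K)) :
    (((g⁻¹ : GL (Fin n) K) : Matrix (Fin n) (Fin n) K) - 1).rank ≤ 1 := by
  have hsum : ((g : Matrix (Fin n) (Fin n) K) - 1).rank
      + fixedDim (g : Matrix (Fin n) (Fin n) K) = n := by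
    rw [Matrix.rank, fixedDim, Matrix.toLin'_apply', LinearMap.finrank_range_add_finrank_ker,
      Module.finrank_fin_fun]
  have hfac : ((g⁻¹ : GL (Fin n) K) : Matrix (Fin n) (Fin n) K) - 1
      = -((g⁻¹ : GL (Fin n) K) : Matrix (Fin n) (Fin n) K) * ((g : Matrix _ _ K) - 1) := by
    rw [neg_mul, mul_sub, ← Units.val_mul, inv_mul_cancel, Units.val_one, mul_one, neg_sub]
  rw [hfac]
  exact (rank_mul_le_right _ _).trans (by omega)

theorem MvPolynomial.dvd_sub_self_of_forall_dvd_X_sub {R σ : Type*} [CommRing R]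
    (φ : MvPolynomial σ R →ₐ[R] MvPolynomial σ R) {ℓ : MvPolynomial σ R}
    (hX : ∀ i, ℓ ∣ φ (X i) - X i) (p : MvPolynomial σ R) : ℓ ∣ φ p - p := by
  have hmod : (Ideal.Quotient.mkₐ R (Ideal.span {ℓ})).comp φ = Ideal.Quotient.mkₐ R _ :=
    algHom_ext fun i => by
      simpa [Ideal.Quotient.eq, Ideal.mem_span_singleton] using hX i
  rw [← Ideal.mem_span_singleton, ← Ideal.Quotient.eq]
  exact DFunLike.congr_fun hmod p

theorem polyAct_X_sub_X (g : GL (Fin n) K) (i : Fin n) :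
    polyAct g (X i) - X i
      = ∑ j, (((g⁻¹ : GL (Fin n) K) : Matrix (Fin n) (Fin n) K) - 1) i j • X j := by
  simp [polyAct_X, sub_smul, one_apply]

theorem polyAct_mul (g h : GL (Fin n) K) : polyAct (g * h) = (polyAct g).comp (polyAct h) := by
  refine algHom_ext fun i => ?_
  simp only [AlgHom.coe_comp, Function.comp_apply, polyAct_X, map_sum, _root_.map_smul,
    _root_.mul_inv_rev, Units.val_mul, mul_apply, Finset.smul_sum, Finset.sum_smul, smul_smul]
  exact Finset.sum_comm

theorem constantCoeff_polyAct (g : GL (Fin n) K) (p : MvPolynomial (Fin n) K) :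
    constantCoeff (polyAct g p) = constantCoeff p := by
  have : constantCoeff.comp (polyAct g).toRingHom = constantCoeff := by
    refine ringHom_ext (fun a => by simp) fun i => ?_
    simp [polyAct_X]
  exact DFunLike.congr_fun this p

theorem exists_dvd_polyAct_sub_self (g : GL (Fin n) K)
    (hg : n - 1 ≤ fixedDim (g : Matrix (Fin n) (Fin n) K)) :
    ∃ ℓ : MvPolynomial (Fin n) K, constantCoeff ℓ = 0 ∧ ∀ p, ℓ ∣ polyAct g p - p := by
  obtain ⟨c, w, hcw⟩ := exists_eq_vecMulVec_of_rank_le_one _ (rank_inv_sub_one_le_one g hg)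
  refine ⟨∑ j, w j • X j, by simp, dvd_sub_self_of_forall_dvd_X_sub _ fun i => ⟨C (c i), ?_⟩⟩
  rw [polyAct_X_sub_X, hcw, Finset.sum_mul]
  refine Finset.sum_congr rfl fun j _ => ?_
  rw [vecMulVec_apply, smul_eq_C_mul, smul_eq_C_mul, C_mul]
  ring

section Invariants

variable {H : Subgroup (GL (Fin n) K)}

theorem mem_invariants {f : MvPolynomial (Fin n) K} :
    f ∈ invariants H ↔ ∀ h ∈ H, polyAct h f = f := by
  simp only [invariants, Algebra.mem_iInf, AlgHom.mem_equalizer, AlgHom.id_apply]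

theorem prod_polyAct_mem_invariants (H : Subgroup (GL (Fin n) K)) [Fintype H] (ℓ : MvPolynomial (Fin n) K) :
    ∏ h : H, polyAct (h : GL (Fin n) K) ℓ ∈ invariants H := by
  refine mem_invariants.2 fun h₀ h₀H => ?_
  rw [map_prod]
  refine Fintype.prod_equiv (Equiv.mulLeft ⟨h₀, h₀H⟩) _ _ fun h => ?_
  rw [← AlgHom.comp_apply, ← polyAct_mul]
  rfl

theorem prod_polyAct_dvd_pow_card [Fintype H] {ℓ f : MvPolynomial (Fin n) K}
    (hf : f ∈ invariants H) (hℓ : ℓ ∣ f) :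
    ∏ h : H, polyAct (h : GL (Fin n) K) ℓ ∣ f ^ Fintype.card H := by
  rw [← Finset.card_univ, ← Finset.prod_const]
  refine Finset.prod_dvd_prod_of_dvd _ _ fun h _ => ?_
  simpa only [mem_invariants.1 hf h h.2] using map_dvd (polyAct (h : GL (Fin n) K)) hℓ

theorem dvd_of_coe_dvd_invariants {a b : invariants H}
    (hab : (a : MvPolynomial (Fin n) K) ∣ b) : a ∣ b := by
  obtain ⟨t, ht⟩ := hab
  by_cases ha : (a : MvPolynomial (Fin n) K) = 0
  · rw [ha, zero_mul, ZeroMemClass.coe_eq_zero] at ht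
    exact ht ▸ dvd_zero a
  have ht_mem : t ∈ invariants H := mem_invariants.2 fun h hH => mul_left_cancel₀ ha <| by
    have := congrArg (polyAct h) ht
    rw [map_mul, mem_invariants.1 a.2 h hH, mem_invariants.1 b.2 h hH] at this
    exact this.symm.trans ht
  exact ⟨⟨t, ht_mem⟩, Subtype.ext ht⟩

end Invariants

end PolyAct

theorem Subalgebra.isNoetherianRing_of_eq_adjoin_range {R A ι : Type*} [CommRing R]
    [IsNoetherianRing R] [CommRing A] [Algebra R A] [Finite ι] {S : Subalgebra R A}
    (v : ι → A) (hS : Algebra.adjoin R (Set.range v) = S) : IsNoetherianRing S :=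
  have : Algebra.FiniteType R S :=
    (Subalgebra.fg_iff_finiteType S).1 (Subalgebra.fg_def.2 ⟨_, Set.finite_range v, hS⟩)
  Algebra.FiniteType.isNoetherianRing R S

theorem idealHeight_le_height {R : Type*} [CommRing R] {I P : Ideal R} [P.IsPrime] (h : I ≤ P) :
    idealHeight I ≤ P.height := by
  rw [PrimeSpectrum.height_eq_orderHeight ⟨P, ‹_›⟩]
  exact iInf₂_le (f := fun (Q : PrimeSpectrum R) (_ : I ≤ Q.asIdeal) => Order.height Q) _ h

theorem height_le_one_of_pseudoreflection_general {K : Type*} [Field K] {n : ℕ}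
    (G H : Subgroup (GL (Fin n) K)) (hGfin : Finite G)
    (hHG : H ≤ G)
    (v : Fin n → MvPolynomial (Fin n) K)
    (hgen : Algebra.adjoin K (Set.range v) = invariants H)
    (g : GL (Fin n) K)
    (hpr : n - 1 ≤ fixedDim ((g : Matrix (Fin n) (Fin n) K))) :
    idealHeight (Ideal.span
      {r : invariants H | ∃ f : invariants H,
        (r : MvPolynomial (Fin n) K) = polyAct g (f : MvPolynomial (Fin n) K) - f}) ≤ 1 := by
  have := Subalgebra.isNoetherianRing_of_eq_adjoin_range v hgen
  have : Finite H := Finite.of_injective _ (Subgroup.inclusion_injective hHG)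
  have := Fintype.ofFinite H
  obtain ⟨ℓ, hℓ0, hℓ⟩ := exists_dvd_polyAct_sub_self g hpr
  let N : invariants H := ⟨_, prod_polyAct_mem_invariants H ℓ⟩
  have hN : ¬IsUnit N := fun hu => by
    simpa [N, map_prod, constantCoeff_polyAct, hℓ0] using
      (hu.map (invariants H).val).map constantCoeff
  obtain ⟨⟨P, hP⟩⟩ := Ideal.nonempty_minimalPrimes (Ideal.span_singleton_ne_top hN)
  have hPprime := hP.isPrime
  refine (idealHeight_le_height (Ideal.span_le.2 ?_)).trans
    (Ideal.height_le_one_of_isPrincipal_of_mem_minimalPrimes _ P hP)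
  rintro r ⟨f, hf⟩
  refine hPprime.radical_le_iff.2 hP.1.2
    ⟨Fintype.card H, Ideal.mem_span_singleton.2 (dvd_of_coe_dvd_invariants ?_)⟩
  rw [SubmonoidClass.coe_pow, hf]
  exact prod_polyAct_dvd_pow_card (hf ▸ r.2) (hf ▸ hℓ f)

/-- If `H ⊴ G`, `R = K[W]^H` is polynomial on `n` homogeneous generators,
and `g ∈ G` is a pseudoreflection (or the identity), then the ideal of `R` generated by
`{g·f - f : f ∈ R}` has height at most `1`. -/
theorem height_le_one_of_pseudoreflection {K : Type*} [Field K] [IsAlgClosed K] {n : ℕ}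
    (G H : Subgroup (GL (Fin n) K)) (hGfin : Finite G)
    (hHG : H ≤ G) (hnorm : ∀ g ∈ G, ∀ h ∈ H, g * h * g⁻¹ ∈ H)
    (v : Fin n → MvPolynomial (Fin n) K)
    (hhom : ∀ i, ∃ d : ℕ, (v i).IsHomogeneous d)
    (hind : AlgebraicIndependent K v)
    (hgen : Algebra.adjoin K (Set.range v) = invariants H)
    (g : GL (Fin n) K) (hgG : g ∈ G)
    (hpr : n - 1 ≤ fixedDim ((g : Matrix (Fin n) (Fin n) K))) :
    idealHeight (Ideal.span
      {r : invariants H | ∃ f : invariants H,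
        (r : MvPolynomial (Fin n) K) = polyAct g (f : MvPolynomial (Fin n) K) - f}) ≤ 1 :=
  height_le_one_of_pseudoreflection_general G H hGfin hHG v hgen g hpr
end

section
/- Let 𝕂 be a field, let g be a 𝕂-algebra automorphism of the polynomial ring 𝕂[x₁,…,xₙ] such that g(𝔪^k) ⊆ 𝔪^k for all k ≥ 1, where 𝔪 = (x₁,…,xₙ), and let α ∈ 𝔪. If g·f − f lies in the ideal (α) of 𝕂[x₁,…,xₙ] for every polynomial f, then for the induced automorphism ĝ of the formal power series ring 𝕂[[x₁,…,xₙ]], the element ĝ·f − f lies in the ideal generated by α in 𝕂[[x₁,…,xₙ]] for every formal power series f. -/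
/-!
Since `𝕂[[x₁,…,xₙ]]` is a Noetherian local ring, Krull's intersection theorem applied to the
module `𝕂[[x]] ⧸ (α)` shows that `(α)` is closed for the `𝔫`-adic topology:
`⋂ₖ ((α) + 𝔫ᵏ) = (α)`. For each `k`, truncating `F` to a polynomial `f` of total degree `< k`
gives `F - f ∈ 𝔫ᵏ`, and then `ĝF - F = (ĝ(F - f) - (F - f)) + (gf - f)` lies in `𝔫ᵏ + (α)`.
-/

open MvPolynomial

theorem Ideal.mem_of_forall_mem_sup_pow {R : Type*} [CommRing R] [IsNoetherianRing R]
    [IsLocalRing R] {I J : Ideal R} (hI : I ≠ ⊤) {x : R} (hx : ∀ k : ℕ, x ∈ J ⊔ I ^ k) :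
    x ∈ J := by
  have hmem : Submodule.Quotient.mk x ∈ (⨅ k : ℕ, I ^ k • ⊤ : Submodule R (R ⧸ J)) := by
    refine (Submodule.mem_iInf _).2 fun k => ?_
    obtain ⟨j, hj, y, hy, rfl⟩ := Submodule.mem_sup.1 (hx k)
    rw [Submodule.Quotient.mk_add, (Submodule.Quotient.mk_eq_zero J).2 hj, zero_add,
      ← mul_one y, ← smul_eq_mul, Submodule.Quotient.mk_smul]
    exact Submodule.smul_mem_smul hy Submodule.mem_top
  rw [Ideal.iInf_pow_smul_eq_bot_of_isLocalRing I hI, Submodule.mem_bot] at hmem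
  exact (Submodule.Quotient.mk_eq_zero J).1 hmem

namespace MvPowerSeries

variable {σ R : Type*}

theorem span_range_X_ne_top [CommSemiring R] [Nontrivial R] :
    Ideal.span (Set.range (X : σ → MvPowerSeries σ R)) ≠ ⊤ :=
  ne_top_of_le_ne_top (RingHom.ker_ne_top constantCoeff)
    (Ideal.span_le.2 (Set.range_subset_iff.2 fun i => by simp))

theorem span_range_X_pow_eq_map [CommSemiring R] (k : ℕ) :
    Ideal.span (Set.range (X : σ → MvPowerSeries σ R)) ^ k =
      (idealOfVars σ R ^ k).map (algebraMap (MvPolynomial σ R) (MvPowerSeries σ R)) := by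
  rw [Ideal.map_pow, Ideal.map_span, ← Set.range_comp]
  congr 3
  ext i : 1
  simp [algebraMap_apply']

/-- Under `toAdicCompletionAlgEquiv`, the ideal `𝔫ᵏ` becomes `Iᵏ • ⊤`, the kernel of the
evaluation at level `k`, and that evaluation sends both `p` and `truncTotal k p` to
`truncTotal k p mod Iᵏ`. -/
theorem sub_truncTotal_mem_span_range_X_pow [CommRing R] [Finite σ] (p : MvPowerSeries σ R)
    (k : ℕ) :
    p - (truncTotal k p : MvPowerSeries σ R) ∈
      Ideal.span (Set.range (X : σ → MvPowerSeries σ R)) ^ k := by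
  set I := idealOfVars σ R
  set e := toAdicCompletionAlgEquiv σ R
  have hker : e (p - (truncTotal k p : MvPowerSeries σ R)) ∈
      (I ^ k • ⊤ : Submodule (MvPolynomial σ R) (AdicCompletion I (MvPolynomial σ R))) := by
    rw [AdicCompletion.pow_smul_top_eq_ker_eval (idealOfVars_fg σ R), LinearMap.mem_ker,
      map_sub, map_sub]
    simp only [e, toAdicCompletionAlgEquiv_apply, toAdicCompletion_coe]
    rw [AdicCompletion.eval_apply, toAdicCompletion_apply_eq_mk_truncTotal, AdicCompletion.eval_of]
    exact sub_self _
  have hmap : p - (truncTotal k p : MvPowerSeries σ R) ∈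
      (I ^ k • ⊤ : Submodule (MvPolynomial σ R) _).map e.symm.toLinearMap :=
    ⟨_, hker, by simp⟩
  rwa [Submodule.map_smul'', Submodule.map_top, LinearMap.range_eq_top.2 e.symm.surjective,
    Ideal.smul_top_eq_map, ← span_range_X_pow_eq_map] at hmap

end MvPowerSeries

theorem powerSeries_difference_mem_span_general {K : Type*} [Field K] {n : ℕ}
    (g : MvPolynomial (Fin n) K ≃ₐ[K] MvPolynomial (Fin n) K)
    (α : MvPolynomial (Fin n) K)
    (h : ∀ f : MvPolynomial (Fin n) K, g f - f ∈ Ideal.span {α})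
    (ghat : MvPowerSeries (Fin n) K ≃ₐ[K] MvPowerSeries (Fin n) K)
    (hext : ∀ f : MvPolynomial (Fin n) K, ghat (f : MvPowerSeries (Fin n) K) =
      ((g f : MvPolynomial (Fin n) K) : MvPowerSeries (Fin n) K))
    (hcont : ∀ k : ℕ,
      ∀ F ∈ (Ideal.span (Set.range (MvPowerSeries.X : Fin n → MvPowerSeries (Fin n) K))) ^ k,
      ghat F ∈ (Ideal.span (Set.range (MvPowerSeries.X : Fin n → MvPowerSeries (Fin n) K))) ^ k) :
    ∀ F : MvPowerSeries (Fin n) K,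
      ghat F - F ∈ Ideal.span {(α : MvPowerSeries (Fin n) K)} := by
  intro F
  refine Ideal.mem_of_forall_mem_sup_pow MvPowerSeries.span_range_X_ne_top fun k => ?_
  set f := MvPowerSeries.truncTotal k F
  have hFf := MvPowerSeries.sub_truncTotal_mem_span_range_X_pow F k
  have hgf : ((g f : MvPolynomial (Fin n) K) : MvPowerSeries (Fin n) K) - f ∈
      Ideal.span {(α : MvPowerSeries (Fin n) K)} := by
    have := Ideal.mem_map_of_mem coeToMvPowerSeries.ringHom (h f)
    rwa [Ideal.map_span, Set.image_singleton, map_sub, coeToMvPowerSeries.ringHom_apply,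
      coeToMvPowerSeries.ringHom_apply, coeToMvPowerSeries.ringHom_apply] at this
  have hsplit : ghat F - F = ((g f : MvPolynomial (Fin n) K) - f : MvPowerSeries (Fin n) K) +
      (ghat (F - f) - (F - f)) := by
    rw [map_sub, hext]
    ring
  rw [hsplit]
  exact Submodule.add_mem_sup hgf (Ideal.sub_mem _ (hcont k _ hFf) hFf)

/-- If an automorphism `g` of `K[x₁,…,xₙ]` preserves all powers of the
maximal ideal `𝔪 = (x₁,…,xₙ)` and `g·f - f ∈ (α)` for all polynomials `f`, then for the
induced automorphism `ĝ` of `K[[x₁,…,xₙ]]` (the continuous extension of `g`, i.e. the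
automorphism extending `g` and preserving the powers of the maximal ideal of the power
series ring) one has `ĝ·F - F ∈ (α)` for every formal power series `F`. -/
theorem powerSeries_difference_mem_span {K : Type*} [Field K] {n : ℕ}
    (g : MvPolynomial (Fin n) K ≃ₐ[K] MvPolynomial (Fin n) K)
    (hgm : ∀ k : ℕ, ∀ f ∈ (Ideal.span (Set.range (X : Fin n → MvPolynomial (Fin n) K))) ^ k,
      g f ∈ (Ideal.span (Set.range (X : Fin n → MvPolynomial (Fin n) K))) ^ k)
    (α : MvPolynomial (Fin n) K)
    (hα : α ∈ Ideal.span (Set.range (X : Fin n → MvPolynomial (Fin n) K)))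
    (h : ∀ f : MvPolynomial (Fin n) K, g f - f ∈ Ideal.span {α})
    (ghat : MvPowerSeries (Fin n) K ≃ₐ[K] MvPowerSeries (Fin n) K)
    (hext : ∀ f : MvPolynomial (Fin n) K, ghat (f : MvPowerSeries (Fin n) K) =
      ((g f : MvPolynomial (Fin n) K) : MvPowerSeries (Fin n) K))
    (hcont : ∀ k : ℕ,
      ∀ F ∈ (Ideal.span (Set.range (MvPowerSeries.X : Fin n → MvPowerSeries (Fin n) K))) ^ k,
      ghat F ∈ (Ideal.span (Set.range (MvPowerSeries.X : Fin n → MvPowerSeries (Fin n) K))) ^ k) :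
    ∀ F : MvPowerSeries (Fin n) K,
      ghat F - F ∈ Ideal.span {(α : MvPowerSeries (Fin n) K)} :=
  powerSeries_difference_mem_span_general g α h ghat hext hcont
end

section
/- Let 𝕂 be a field and let g ∈ GL₃(𝕂) be an upper triangular matrix with dim ker(g − E) = 2 (i.e., g − E has rank 1). Then g has one of the following three forms, for some λ ∈ 𝕂* and a, b ∈ 𝕂: (i) rows (λ, a, b), (0, 1, 0), (0, 0, 1); (ii) rows (1, 0, b), (0, 1, a), (0, 0, λ); (iii) rows (1, (λ−1)b, ab), (0, λ, a), (0, 0, 1). -/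
open MvPolynomial Matrix
def Matrix.IsUpperTri {K : Type*} [Field K] {n : ℕ} (g : Matrix (Fin n) (Fin n) K) : Prop :=
  ∀ i j : Fin n, j < i → g i j = 0

/-!
Since `ker (g - 1)` is 2-dimensional, `g - 1` has rank at most one, so all its 2 × 2 minors
vanish, while invertibility makes the diagonal entries of the upper triangular `g` nonzero.
For `g - 1` the minors say: if `g₀₀ ≠ 1` the last two rows vanish (horizontal); if
`g₀₀ = 1 ≠ g₁₁` then `g₂₂ = 1` and the first row is `b` times the second (mixed); and if
`g₀₀ = g₁₁ = 1` then `g₀₁ g₁₂ = 0`, which gives a vertical matrix, or a horizontal one with `λ = 1`.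
-/

section

variable {K : Type*} [Field K]

namespace Matrix

theorem IsUpperTri.isUpperTriangular {n : ℕ} {g : Matrix (Fin n) (Fin n) K} (h : g.IsUpperTri) :
    g.IsUpperTriangular :=
  fun i j hij => h i j hij

theorem IsUpperTri.apply_self_ne_zero {n : ℕ} {g : Matrix (Fin n) (Fin n) K} (h : g.IsUpperTri)
    (hg : IsUnit g.det) (i : Fin n) : g i i ≠ 0 := by
  rw [det_of_isUpperTriangular h.isUpperTriangular] at hg
  exact Finset.prod_ne_zero_iff.mp hg.ne_zero i (Finset.mem_univ i)

theorem rank_add_finrank_ker_toLin' {n : Type*} [Fintype n] [DecidableEq n] (M : Matrix n n K) :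
    M.rank + Module.finrank K (LinearMap.ker M.toLin') = Fintype.card n := by
  rw [rank, ← toLin'_apply', LinearMap.finrank_range_add_finrank_ker,
    Module.finrank_fintype_fun_eq_card]

theorem exists_eq_vecMulVec_of_rank_le_one_s7 {m n : Type*} [Fintype n] [DecidableEq n]
    {M : Matrix m n K} (h : M.rank ≤ 1) : ∃ v w, M = vecMulVec v w := by
  obtain ⟨v, hv⟩ := finrank_le_one_iff.mp h
  have hcol : ∀ j, ∃ c : K, c • (v : m → K) = M.col j := fun j => by
    obtain ⟨c, hc⟩ := hv ⟨M *ᵥ Pi.single j 1, Pi.single j 1, rfl⟩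
    exact ⟨c, by simpa [Subtype.ext_iff] using hc⟩
  choose w hw using hcol
  refine ⟨v, w, ext fun i j => ?_⟩
  rw [vecMulVec_apply, mul_comm, ← col_apply M j i, ← hw j, Pi.smul_apply, smul_eq_mul]

theorem apply_mul_apply_eq_of_rank_le_one {m n : Type*} [Fintype n] [DecidableEq n]
    {M : Matrix m n K} (h : M.rank ≤ 1) (i k : m) (j l : n) :
    M i j * M k l = M i l * M k j := by
  obtain ⟨v, w, rfl⟩ := exists_eq_vecMulVec_of_rank_le_one_s7 h
  simp only [vecMulVec_apply]
  ring

end Matrix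

theorem upperTriangular_fin_three_forms_of_rank_le_one {p q r s t u : K}
    (hp : p ≠ 0) (hs : s ≠ 0) (hu : u ≠ 0) (hrank : (!![p, q, r; 0, s, t; 0, 0, u] - 1).rank ≤ 1) :
    ∃ (l : K) (_ : l ≠ 0) (a b : K),
      !![p, q, r; 0, s, t; 0, 0, u] = !![l, a, b; 0, 1, 0; 0, 0, 1] ∨
      !![p, q, r; 0, s, t; 0, 0, u] = !![1, 0, b; 0, 1, a; 0, 0, l] ∨
      !![p, q, r; 0, s, t; 0, 0, u] = !![1, (l - 1) * b, a * b; 0, l, a; 0, 0, 1] := by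
  have minor := apply_mul_apply_eq_of_rank_le_one hrank
  have hps := minor 0 1 0 1
  have hpt := minor 0 1 0 2
  have hpu := minor 0 2 0 2
  have hqu := minor 0 2 1 2
  have hsu := minor 1 2 1 2
  have hqt := minor 0 1 1 2
  simp only [Matrix.sub_apply, of_apply, cons_val', cons_val_zero, cons_val_one, cons_val,
    cons_val_fin_one, one_apply_eq, one_apply_ne, ne_eq, zero_ne_one, one_ne_zero, Fin.reduceEq,
    not_false_eq_true, sub_zero, sub_self, mul_zero, mul_eq_zero, sub_eq_zero]
    at hps hpt hpu hqu hsu hqt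
  rcases eq_or_ne p 1 with rfl | hp1
  swap
  · obtain rfl := hps.resolve_left hp1
    obtain rfl := hpt.resolve_left hp1
    obtain rfl := hpu.resolve_left hp1
    exact ⟨p, hp, q, r, Or.inl rfl⟩
  rcases eq_or_ne s 1 with rfl | hs1
  swap
  · obtain rfl := hsu.resolve_left hs1
    have hs1' : s - 1 ≠ 0 := sub_ne_zero.mpr hs1
    refine ⟨s, hs, t, q / (s - 1), Or.inr (Or.inr ?_)⟩
    rw [mul_div_cancel₀ q hs1', mul_div_assoc', mul_comm t q, hqt, mul_div_cancel_right₀ r hs1']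
  rcases eq_or_ne q 0 with rfl | hq
  · exact ⟨u, hu, t, r, Or.inr (Or.inl rfl)⟩
  · obtain rfl := hqu.resolve_left hq
    obtain rfl : t = 0 := by simpa [hq] using hqt
    exact ⟨1, one_ne_zero, q, r, Or.inl rfl⟩

end

/-- Every upper triangular `g ∈ GL₃(K)` whose fixed space has dimension 2
is horizontal, vertical, or mixed. -/
theorem upper_triangular_pseudoreflection_classification {K : Type*} [Field K]
    (g : GL (Fin 3) K)
    (htri : Matrix.IsUpperTri ((g : Matrix (Fin 3) (Fin 3) K)))
    (hdim : fixedDim ((g : Matrix (Fin 3) (Fin 3) K)) = 2) :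
    ∃ (l : K) (_ : l ≠ 0) (a b : K),
      (g : Matrix (Fin 3) (Fin 3) K) = !![l, a, b; 0, 1, 0; 0, 0, 1] ∨
      (g : Matrix (Fin 3) (Fin 3) K) = !![1, 0, b; 0, 1, a; 0, 0, l] ∨
      (g : Matrix (Fin 3) (Fin 3) K) = !![1, (l - 1) * b, a * b; 0, l, a; 0, 0, 1] := by
  set A : Matrix (Fin 3) (Fin 3) K := ↑g
  have hdiag := htri.apply_self_ne_zero (isUnits_det_units g)
  have hrank : (A - 1).rank ≤ 1 := by
    have := rank_add_finrank_ker_toLin' (A - 1)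
    rw [Fintype.card_fin] at this
    unfold fixedDim at hdim
    omega
  have hA : A = !![A 0 0, A 0 1, A 0 2; 0, A 1 1, A 1 2; 0, 0, A 2 2] := by
    simpa only [htri 1 0 (by decide), htri 2 0 (by decide), htri 2 1 (by decide)]
      using eta_fin_three A
  rw [hA] at hrank ⊢
  exact upperTriangular_fin_three_forms_of_rank_le_one (hdiag 0) (hdiag 1) (hdiag 2) hrank
end

section
/- Let 𝕂 be a field of characteristic p > 0, let n ≥ 1, and let G be a finite subgroup of the group of invertible upper triangular n×n matrices over 𝕂. Then the set H of unipotent elements of G is a subgroup of G, and H is the unique Sylow p-subgroup of G; in particular, H is normal in G. -/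
open MvPolynomial Matrix
def Matrix.IsUnipotentMat {K : Type*} [Field K] {n : ℕ} (g : Matrix (Fin n) (Fin n) K) : Prop :=
  IsNilpotent (g - 1)

/-!
Taking diagonals is a homomorphism from `G` to `Kⁿ` (under pointwise multiplication), and its
kernel is exactly the set of unipotent elements. In characteristic `p` we have
`(g - 1) ^ p ^ k = g ^ p ^ k - 1`, so a unipotent `g` has `p`-power order and the kernel is a
normal `p`-subgroup. Conversely `x ^ p ^ k = 1` forces `x = 1` in `K`, so the diagonal of every
`p`-element is trivial and every `p`-subgroup lies in the kernel. Hence the kernel is the unique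
Sylow `p`-subgroup.
-/

section CharP

variable {R : Type*} {p : ℕ}

theorem exists_pow_char_pow_eq_one_of_isNilpotent_sub_one [Ring R] [Fact p.Prime] [CharP R p]
    {x : R} (hx : IsNilpotent (x - 1)) : ∃ k, x ^ p ^ k = 1 := by
  obtain ⟨k, hk⟩ := hx
  refine ⟨k, sub_eq_zero.mp ?_⟩
  rw [← one_pow (p ^ k), ← sub_pow_char_pow_of_commute _ k (Commute.one_right x),
    ← Nat.sub_add_cancel (k.lt_pow_self (Fact.out : p.Prime).one_lt).le, pow_add, hk, mul_zero]

theorem eq_one_of_pow_expChar_pow_eq_one [CommRing R] [IsReduced R] [ExpChar R p] {x : R}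
    {k : ℕ} (h : x ^ p ^ k = 1) : x = 1 := by
  simpa using (ExpChar.pow_prime_pow_mul_eq_one_iff p k 1 x).mp (by simpa using h)

end CharP

namespace Matrix

theorem IsUpperTri.isUpperTriangular_s8 {K : Type*} [Field K] {n : ℕ}
    {M : Matrix (Fin n) (Fin n) K} (hM : M.IsUpperTri) : M.IsUpperTriangular :=
  fun i j => hM i j

variable {m R : Type*} [Fintype m] [LinearOrder m] {M N : Matrix m m R}

theorem IsUpperTriangular.diag_mul [NonUnitalNonAssocSemiring R] (hM : M.IsUpperTriangular)
    (hN : N.IsUpperTriangular) : (M * N).diag = M.diag * N.diag := by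
  funext i
  simp only [diag_apply, mul_apply, Pi.mul_apply]
  refine Finset.sum_eq_single i (fun k _ hki => ?_) (by simp)
  rcases hki.lt_or_gt with hki | hki
  · rw [hM hki, zero_mul]
  · rw [hN hki, mul_zero]

variable [DecidableEq m]

theorem IsUpperTriangular.diag_pow [Semiring R] (hM : M.IsUpperTriangular) (k : ℕ) :
    (M ^ k).diag = M.diag ^ k := by
  induction k with
  | zero => simp
  | succ k ih => rw [pow_succ, IsUpperTriangular.diag_mul (hM.pow k) hM, ih, pow_succ]

theorem IsUpperTriangular.pow_card_eq_zero [CommRing R] (hM : M.IsUpperTriangular)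
    (hd : M.diag = 0) : M ^ Fintype.card m = 0 := by
  have hchar : M.charpoly = Polynomial.X ^ Fintype.card m := by
    simp [charpoly_of_isUpperTriangular M hM, show ∀ i, M i i = 0 from congrFun hd]
  simpa [hchar] using M.aeval_self_charpoly

theorem IsUpperTriangular.isNilpotent_sub_one_iff [CommRing R] [IsReduced R]
    (hM : M.IsUpperTriangular) : IsNilpotent (M - 1) ↔ M.diag = 1 := by
  have hM1 : (M - 1).IsUpperTriangular := hM.sub blockTriangular_one
  have hdiag : (M - 1).diag = M.diag - 1 := by simp
  constructor
  · rintro ⟨k, hk⟩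
    rw [← sub_eq_zero, ← hdiag]
    funext i
    refine IsReduced.eq_zero _ ⟨k, ?_⟩
    simpa [hk] using (congrFun (hM1.diag_pow k) i).symm
  · intro hd
    exact ⟨_, hM1.pow_card_eq_zero (by rw [hdiag, hd, sub_self])⟩

theorem IsUpperTriangular.diag_eq_one_of_pow_expChar_pow_eq_one [CommRing R] [IsReduced R]
    {p : ℕ} [ExpChar R p] (hM : M.IsUpperTriangular) {k : ℕ} (h : M ^ p ^ k = 1) :
    M.diag = 1 := by
  funext i
  refine eq_one_of_pow_expChar_pow_eq_one (p := p) (k := k) ?_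
  simpa [h] using (congrFun (hM.diag_pow (p ^ k)) i).symm

variable [Semiring R]

def upperTriangularDiagHom (G : Subgroup (GL m R))
    (hG : ∀ g ∈ G, (g : Matrix m m R).IsUpperTriangular) : G →* (m → R) where
  toFun g := ((g : GL m R) : Matrix m m R).diag
  map_one' := diag_one
  map_mul' g h := (hG g g.2).diag_mul (hG h h.2)

end Matrix

theorem unipotent_subgroup_is_unique_sylow_general {K : Type*} [Field K] {p : ℕ} (hp : 0 < p)
    [CharP K p] {n : ℕ} (hn : 1 ≤ n)
    (G : Subgroup (GL (Fin n) K))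
    (htri : ∀ g ∈ G, Matrix.IsUpperTri ((g : Matrix (Fin n) (Fin n) K))) :
    ∃ H : Subgroup G,
      ((H : Set G) =
        {g : G | Matrix.IsUnipotentMat (((g : GL (Fin n) K)) : Matrix (Fin n) (Fin n) K)}) ∧
      (∃ P : Sylow p G, (P : Subgroup G) = H) ∧
      (∀ P : Sylow p G, (P : Subgroup G) = H) ∧
      H.Normal := by
  have : NeZero p := ⟨hp.ne'⟩
  have := CharP.char_is_prime_of_pos K p
  -- so that the matrix ring has characteristic `p`
  have : Nonempty (Fin n) := ⟨⟨0, hn⟩⟩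
  have htri' : ∀ g ∈ G, (g : Matrix (Fin n) (Fin n) K).IsUpperTriangular :=
    fun g hg => (htri g hg).isUpperTriangular_s8
  let φ := upperTriangularDiagHom G htri'
  have hker (g : G) :
      g ∈ φ.ker ↔ IsUnipotentMat ((g : GL (Fin n) K) : Matrix (Fin n) (Fin n) K) :=
    (htri' g g.2).isNilpotent_sub_one_iff.symm
  have hpgroup : IsPGroup p φ.ker := fun g => by
    obtain ⟨k, hk⟩ := exists_pow_char_pow_eq_one_of_isNilpotent_sub_one ((hker g).mp g.2)
    exact ⟨k, by simpa [Subtype.ext_iff, Units.ext_iff] using hk⟩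
  have hle (P : Sylow p G) : (P : Subgroup G) ≤ φ.ker := fun g hg => by
    obtain ⟨k, hk⟩ := P.isPGroup' ⟨g, hg⟩
    have hk' : ((g : GL (Fin n) K) : Matrix (Fin n) (Fin n) K) ^ p ^ k = 1 := by
      simpa [Subtype.ext_iff, Units.ext_iff] using hk
    exact MonoidHom.mem_ker.mpr ((htri' g g.2).diag_eq_one_of_pow_expChar_pow_eq_one hk')
  have hunique (P : Sylow p G) : (P : Subgroup G) = φ.ker := (P.is_maximal' hpgroup (hle P)).symm
  exact ⟨φ.ker, Set.ext hker, ⟨default, hunique _⟩, hunique, φ.normal_ker⟩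

/-- In a finite group `G` of invertible upper triangular matrices over a
field of characteristic `p > 0`, the unipotent elements form a subgroup which is the
unique Sylow `p`-subgroup of `G`; in particular it is normal. -/
theorem unipotent_subgroup_is_unique_sylow {K : Type*} [Field K] {p : ℕ} (hp : 0 < p)
    [CharP K p] {n : ℕ} (hn : 1 ≤ n)
    (G : Subgroup (GL (Fin n) K)) [Finite G]
    (htri : ∀ g ∈ G, Matrix.IsUpperTri ((g : Matrix (Fin n) (Fin n) K))) :
    ∃ H : Subgroup G,
      ((H : Set G) =
        {g : G | Matrix.IsUnipotentMat (((g : GL (Fin n) K)) : Matrix (Fin n) (Fin n) K)}) ∧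
      (∃ P : Sylow p G, (P : Subgroup G) = H) ∧
      (∀ P : Sylow p G, (P : Subgroup G) = H) ∧
      H.Normal :=
  unipotent_subgroup_is_unique_sylow_general hp hn G htri
end

section
/- Let 𝕂 be an algebraically closed field of characteristic p > 0 and let L be a finite additive subgroup of (𝕂, +), so |L| = p^l for some l ≥ 0. Let B = { matrices with rows (1, 0, β), (0, 1, 0), (0, 0, 1) : β ∈ L } ≤ GL₃(𝕂), acting on W = 𝕂³ with coordinates x, y, z. Then 𝕂[x, y, z]^B = 𝕂[z, y, ∏_{β ∈ L}(x + βz)], and these three generators are algebraically independent; in particular the ring of invariants of B is a polynomial algebra. -/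
open MvPolynomial Matrix

/-- The corner transvection with parameter `β`. -/
noncomputable def cornerGL {K : Type*} [Field K] (β : K) : GL (Fin 3) K :=
  Matrix.GeneralLinearGroup.mkOfDetNeZero
    !![1, 0, β; 0, 1, 0; 0, 0, 1] (by simp [Matrix.det_fin_three, Matrix.vecHead, Matrix.vecTail])

/-!
Write `K[x, y, z] = A[x]` with `A = K[y, z]`. The transvection with parameter `β` acts as the
translation `x ↦ x - βz`, and `F = ∏_{β ∈ L} (x + βz)` is an invariant that is monic of degree
`|L|` in `x`. If `f` is invariant, so are the quotient and the remainder of `f` by `F`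
(uniqueness of division); the remainder has degree `< |L|` and takes the same value at the `|L|`
distinct points `βz`, so it lies in `A`, and induction on the degree puts `f` in
`A[F] = K[y, z, F]`. The substitution `x ↦ F` fixing `y, z` is injective because `F` is monic
of positive degree in `x`, which gives the algebraic independence.
-/

namespace Polynomial

variable {A : Type*} [CommRing A]

theorem taylor_divByMonic_modByMonic [Nontrivial A] {F p : A[X]} {r : A} (hF : F.Monic)
    (hFr : taylor r F = F) (hpr : taylor r p = p) :
    taylor r (p /ₘ F) = p /ₘ F ∧ taylor r (p %ₘ F) = p %ₘ F := by
  have hsum : taylor r (p %ₘ F) + F * taylor r (p /ₘ F) = p := by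
    simpa only [map_add, taylor_mul, hFr, hpr] using congrArg (taylor r) (modByMonic_add_div p F)
  have hdeg : (taylor r (p %ₘ F)).degree < F.degree := by
    rw [degree_taylor]; exact degree_modByMonic_lt p hF
  obtain ⟨hdiv, hmod⟩ := div_modByMonic_unique _ _ hF ⟨hsum, hdeg⟩
  exact ⟨hdiv.symm, hmod.symm⟩

theorem aeval_injective_of_monic {F : A[X]} (hF : F.Monic) (hF₀ : 0 < F.natDegree) :
    Function.Injective (aeval F : A[X] →ₐ[A] A[X]) :=
  transcendental_iff_injective.mp <|
    F.transcendental hF₀.ne' (hF.leadingCoeff ▸ one_mem _)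

variable [IsDomain A] {ι : Type*} [Fintype ι] {t : ι → A}

theorem eq_C_eval_zero_of_taylor_eq (ht : Function.Injective t) {p : A[X]}
    (hdeg : p.natDegree < Fintype.card ι) (hp : ∀ i, taylor (t i) p = p) :
    p = C (p.eval 0) := by
  refine eq_of_natDegree_lt_card_of_eval_eq _ _ ht (fun i => ?_) (by simpa using hdeg)
  simpa [taylor_eval] using congrArg (eval 0) (hp i)

theorem mem_adjoin_of_forall_taylor_eq (ht : Function.Injective t) {F : A[X]} (hF : F.Monic)
    (hF₀ : 0 < F.natDegree) (hFι : F.natDegree ≤ Fintype.card ι)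
    (hFt : ∀ i, taylor (t i) F = F) {p : A[X]} (hp : ∀ i, taylor (t i) p = p) :
    p ∈ Algebra.adjoin A {F} := by
  induction hn : p.natDegree using Nat.strong_induction_on generalizing p with
  | _ n ih =>
  by_cases hpF : p.natDegree < F.natDegree
  · rw [eq_C_eval_zero_of_taylor_eq ht (hpF.trans_le hFι) hp]
    exact Subalgebra.algebraMap_mem _ _
  have hQR i := taylor_divByMonic_modByMonic hF (hFt i) (hp i)
  have hR : p %ₘ F = C ((p %ₘ F).eval 0) :=
    eq_C_eval_zero_of_taylor_eq ht
      ((natDegree_modByMonic_lt p hF fun h => by simp [h] at hF₀).trans_le hFι)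
      fun i => (hQR i).2
  have hQ : p /ₘ F ∈ Algebra.adjoin A {F} :=
    ih _ (by rw [← hn, natDegree_divByMonic p hF]; omega) (fun i => (hQR i).1) rfl
  rw [← modByMonic_add_div p F, hR]
  exact add_mem (Subalgebra.algebraMap_mem _ _)
    (mul_mem (Algebra.subset_adjoin rfl) hQ)

end Polynomial

section FinSuccEquiv

variable {K : Type*} [Field K]

theorem finSuccEquiv_C {n : ℕ} (a : K) : finSuccEquiv K n (C a) = Polynomial.C (C a) :=
  (finSuccEquiv K n).commutes a

theorem finSuccEquiv_X_one : finSuccEquiv K 2 (X 1) = Polynomial.C (X 0) :=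
  finSuccEquiv_X_succ (j := 0)

theorem finSuccEquiv_X_two : finSuccEquiv K 2 (X 2) = Polynomial.C (X 1) :=
  finSuccEquiv_X_succ (j := 1)

end FinSuccEquiv

section CornerGroup

variable {K : Type*} [Field K]

theorem mem_invariants_iff {n : ℕ} {G : Subgroup (GL (Fin n) K)} {f : MvPolynomial (Fin n) K} :
    f ∈ invariants G ↔ ∀ g ∈ G, polyAct g f = f := by
  simp [invariants, Algebra.mem_iInf, AlgHom.mem_equalizer]

theorem cornerGL_add (β γ : K) : cornerGL (β + γ) = cornerGL β * cornerGL γ := by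
  ext i j
  fin_cases i <;> fin_cases j <;>
    simp [cornerGL, Matrix.mul_apply, Fin.sum_univ_three, add_comm]

theorem cornerGL_neg (β : K) : cornerGL (-β) = (cornerGL β)⁻¹ := by
  refine (inv_eq_of_mul_eq_one_right ?_).symm
  rw [← cornerGL_add, add_neg_cancel]
  ext i j
  fin_cases i <;> fin_cases j <;> simp [cornerGL]

theorem polyAct_cornerGL (β : K) :
    polyAct (cornerGL β) = aeval ![X 0 - C β * X 2, X 1, X 2] := by
  rw [polyAct, ← cornerGL_neg]
  congr 1
  funext i
  fin_cases i <;> simp [cornerGL, Fin.sum_univ_three, smul_eq_C_mul, sub_eq_add_neg]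

variable (L : AddSubgroup K) [Fintype L]

noncomputable def orbitProdX : MvPolynomial (Fin 3) K :=
  ∏ β : L, (X 0 + C (β : K) * X 2)

theorem polyAct_cornerGL_orbitProdX {β : K} (hβ : β ∈ L) :
    polyAct (cornerGL β) (orbitProdX L) = orbitProdX L := by
  rw [orbitProdX, polyAct_cornerGL, map_prod]
  refine (Fintype.prod_equiv (Equiv.addRight (⟨β, hβ⟩ : L)) _ _ fun γ => ?_).symm
  simp only [Equiv.coe_addRight, AddSubgroup.coe_add, map_add, map_mul, aeval_X, aeval_C,
    algebraMap_eq, cons_val]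
  ring

theorem finSuccEquiv_polyAct_cornerGL_neg (β : K) (f : MvPolynomial (Fin 3) K) :
    finSuccEquiv K 2 (polyAct (cornerGL (-β)) f) =
      Polynomial.taylor (C β * X 1) (finSuccEquiv K 2 f) := by
  have h : (finSuccEquiv K 2).toAlgHom.comp (polyAct (cornerGL (-β))) =
      ((Polynomial.taylorAlgHom (C β * X 1 : MvPolynomial (Fin 2) K)).restrictScalars K).comp
        (finSuccEquiv K 2).toAlgHom := by
    apply MvPolynomial.algHom_ext
    intro i
    fin_cases i <;>
      simp [polyAct_cornerGL, finSuccEquiv_X_zero, finSuccEquiv_X_one, finSuccEquiv_X_two,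
        finSuccEquiv_C]
  exact DFunLike.congr_fun h f

theorem finSuccEquiv_orbitProdX :
    finSuccEquiv K 2 (orbitProdX L) =
      ∏ β : L, (Polynomial.X + Polynomial.C (C (β : K) * X 1)) := by
  simp [orbitProdX, finSuccEquiv_X_zero, finSuccEquiv_X_two, finSuccEquiv_C, Polynomial.C_mul]

theorem monic_finSuccEquiv_orbitProdX : (finSuccEquiv K 2 (orbitProdX L)).Monic := by
  rw [finSuccEquiv_orbitProdX]
  exact Polynomial.monic_prod_of_monic _ _ fun β _ => Polynomial.monic_X_add_C _

theorem natDegree_finSuccEquiv_orbitProdX :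
    (finSuccEquiv K 2 (orbitProdX L)).natDegree = Fintype.card L := by
  rw [finSuccEquiv_orbitProdX,
    Polynomial.natDegree_prod_of_monic _ _ fun β _ => Polynomial.monic_X_add_C _]
  simp only [Polynomial.natDegree_X_add_C, Finset.sum_const, Finset.card_univ, smul_eq_mul,
    mul_one]

theorem natDegree_finSuccEquiv_orbitProdX_pos :
    0 < (finSuccEquiv K 2 (orbitProdX L)).natDegree := by
  rw [natDegree_finSuccEquiv_orbitProdX]
  exact Fintype.card_pos

theorem finSuccEquiv_comp_aeval_orbitProdX :
    (finSuccEquiv K 2).toAlgHom.comp (aeval ![orbitProdX L, X 1, X 2]) =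
      ((Polynomial.aeval (finSuccEquiv K 2 (orbitProdX L))).restrictScalars K).comp
        (finSuccEquiv K 2).toAlgHom := by
  apply MvPolynomial.algHom_ext
  intro i
  fin_cases i <;> simp [finSuccEquiv_X_zero, finSuccEquiv_X_one, finSuccEquiv_X_two]


theorem adjoin_orbitProdX_eq_range :
    Algebra.adjoin K {X 2, X 1, orbitProdX L} = (aeval ![orbitProdX L, X 1, X 2]).range := by
  rw [← Algebra.adjoin_range_eq_range_aeval]
  congr 1
  simp [Matrix.range_cons, Set.insert_comm]

theorem injective_aeval_orbitProdX :
    Function.Injective (aeval (R := K) ![orbitProdX L, X 1, X 2]) := by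
  have h : Function.Injective
      ((finSuccEquiv K 2).toAlgHom.comp (aeval ![orbitProdX L, X 1, X 2])) := by
    rw [finSuccEquiv_comp_aeval_orbitProdX]
    exact (Polynomial.aeval_injective_of_monic (monic_finSuccEquiv_orbitProdX L)
      (natDegree_finSuccEquiv_orbitProdX_pos L)).comp
      (finSuccEquiv K 2).injective
  exact Function.Injective.of_comp (f := (finSuccEquiv K 2).toAlgHom) h

theorem algebraicIndependent_orbitProdX :
    AlgebraicIndependent K ![X 2, X 1, orbitProdX L] := by
  have h := (algebraicIndependent_iff_injective_aeval.mpr (injective_aeval_orbitProdX L)).comp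
    ![2, 1, 0] (by decide)
  convert h using 1
  funext i
  fin_cases i <;> rfl

theorem mem_adjoin_orbitProdX_of_forall_polyAct_eq {f : MvPolynomial (Fin 3) K}
    (hf : ∀ β ∈ L, polyAct (cornerGL β) f = f) :
    f ∈ Algebra.adjoin K {X 2, X 1, orbitProdX L} := by
  have htaylor {g : MvPolynomial (Fin 3) K} (hg : ∀ β ∈ L, polyAct (cornerGL β) g = g)
      (β : L) :
      Polynomial.taylor (C (β : K) * X 1) (finSuccEquiv K 2 g) = finSuccEquiv K 2 g := by
    rw [← finSuccEquiv_polyAct_cornerGL_neg, hg _ (neg_mem β.2)]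
  have ht : Function.Injective fun β : L => (C (β : K) * X 1 : MvPolynomial (Fin 2) K) :=
    fun β γ h => Subtype.ext (C_injective _ _ (mul_right_cancel₀ (X_ne_zero 1) h))
  have hmem := Polynomial.mem_adjoin_of_forall_taylor_eq ht (monic_finSuccEquiv_orbitProdX L)
    (natDegree_finSuccEquiv_orbitProdX_pos L)
    (natDegree_finSuccEquiv_orbitProdX L).le
    (htaylor fun β hβ => polyAct_cornerGL_orbitProdX L hβ) (htaylor hf)
  rw [Algebra.adjoin_singleton_eq_range_aeval] at hmem
  obtain ⟨q, hq⟩ := hmem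
  rw [adjoin_orbitProdX_eq_range]
  refine ⟨(finSuccEquiv K 2).symm q, (finSuccEquiv K 2).injective ?_⟩
  have := DFunLike.congr_fun (finSuccEquiv_comp_aeval_orbitProdX L) ((finSuccEquiv K 2).symm q)
  simp_all

end CornerGroup

theorem invariants_of_corner_group_general {K : Type*} [Field K]
    (L : AddSubgroup K) [Fintype L]
    (B : Subgroup (GL (Fin 3) K))
    (hB : (B : Set (GL (Fin 3) K)) = {g : GL (Fin 3) K | ∃ β ∈ L, g = cornerGL β}) :
    AlgebraicIndependent K
      ![(X 2 : MvPolynomial (Fin 3) K), X 1, ∏ β : L, (X 0 + C (β : K) * X 2)] ∧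
    invariants B = Algebra.adjoin K
      {(X 2 : MvPolynomial (Fin 3) K), X 1, ∏ β : L, (X 0 + C (β : K) * X 2)} := by
  have hinv (f : MvPolynomial (Fin 3) K) :
      f ∈ invariants B ↔ ∀ β ∈ L, polyAct (cornerGL β) f = f := by
    have hmem (g : GL (Fin 3) K) : g ∈ B ↔ ∃ β ∈ L, g = cornerGL β := Set.ext_iff.mp hB g
    rw [mem_invariants_iff]
    refine ⟨fun h β hβ => h _ ((hmem _).2 ⟨β, hβ, rfl⟩), fun h g hg => ?_⟩
    obtain ⟨β, hβ, rfl⟩ := (hmem g).1 hg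
    exact h β hβ
  refine ⟨algebraicIndependent_orbitProdX L, le_antisymm
    (fun f hf => mem_adjoin_orbitProdX_of_forall_polyAct_eq L ((hinv f).1 hf))
    (Algebra.adjoin_le ?_)⟩
  rintro f (rfl | rfl | rfl) <;> refine (hinv _).2 fun β hβ => ?_
  · simp [polyAct_cornerGL]
  · simp [polyAct_cornerGL]
  · exact polyAct_cornerGL_orbitProdX L hβ

/-- The invariant ring of the group `B` of corner transvections with
parameters in a finite additive subgroup `L ≤ (K, +)` is the polynomial algebra
`K[z, y, ∏_{β ∈ L} (x + βz)]`. -/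
theorem invariants_of_corner_group {K : Type*} [Field K] [IsAlgClosed K] {p : ℕ}
    (hp : 0 < p) [CharP K p]
    (L : AddSubgroup K) [Fintype L]
    (B : Subgroup (GL (Fin 3) K))
    (hB : (B : Set (GL (Fin 3) K)) = {g : GL (Fin 3) K | ∃ β ∈ L, g = cornerGL β}) :
    AlgebraicIndependent K
      ![(X 2 : MvPolynomial (Fin 3) K), X 1, ∏ β : L, (X 0 + C (β : K) * X 2)] ∧
    invariants B = Algebra.adjoin K
      {(X 2 : MvPolynomial (Fin 3) K), X 1, ∏ β : L, (X 0 + C (β : K) * X 2)} :=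
  invariants_of_corner_group_general L B hB
end

section
/- Let 𝕂 be an algebraically closed field of odd characteristic p, let s ∈ 𝕂, and let c₁, …, c_t ∈ 𝕂. For each i let σᵢ ∈ GL₃(𝕂) be the matrix with rows (1, s−cᵢ, cᵢ(cᵢ−s)/2), (0, −1, cᵢ), (0, 0, 1), and let A = ⟨σ₁, …, σ_t⟩. Let K be the additive subgroup of (𝕂, +) generated by the differences cᵢ − cⱼ (1 ≤ i, j ≤ t), and let A_K = { matrices with rows (1, α, α(α−s)/2), (0, 1, α), (0, 0, 1) : α ∈ K }. Then for all i, j the product σᵢσⱼ is the matrix with rows (1, cᵢ−cⱼ, (cᵢ−cⱼ)(cᵢ−cⱼ−s)/2), (0, 1, cᵢ−cⱼ), (0, 0, 1); moreover A_K is a subgroup of A of index 2, A = A_K ∪ σ₁A_K, and |A| = 2|K| = 2p^k where |K| = p^k. -/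
open MvPolynomial Matrix

/-- The mixed pseudoreflection `σᵢ` with parameters `s, c`. -/
noncomputable def sigmaGL {K : Type*} [Field K] (s c : K) : GL (Fin 3) K :=
  Matrix.GeneralLinearGroup.mkOfDetNeZero
    !![1, s - c, c * (c - s) / 2; 0, -1, c; 0, 0, 1]
    (by simp [Matrix.det_fin_three, Matrix.vecHead, Matrix.vecTail])

/-- The unipotent element of `A_K` with parameter `α`. -/
noncomputable def mixedUnipGL {K : Type*} [Field K] (s α : K) : GL (Fin 3) K :=
  Matrix.GeneralLinearGroup.mkOfDetNeZero
    !![1, α, α * (α - s) / 2; 0, 1, α; 0, 0, 1]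
    (by simp [Matrix.det_fin_three, Matrix.vecHead, Matrix.vecTail])

/-!
Write `u α` for `mixedUnipGL s α` and `σ a` for `sigmaGL s a`. Once `2 ≠ 0`, a direct computation
gives `u α * u β = u (α + β)` and `σ a * σ b = u (a - b)`. Hence every `σ a` is an involution,
conjugation by it inverts `u`, and `σ (c i) = σ (c i₀) * u (c i₀ - c i)`. So `A` is generated by the
involution `σ (c i₀)` together with `A_K`, which it normalizes, and therefore
`A = A_K ∪ σ (c i₀) A_K`. This union is disjoint because `σ a` has middle diagonal entry `-1 ≠ 1`,
so `A_K` has index 2 in `A`. Finally `|K| = pᵏ` since `K` is a finitely generated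
`𝔽_p`-vector space.
-/

namespace Subgroup

variable {G : Type*} [Group G]

theorem coe_zpowers_of_mul_self_eq_one {g : G} (hg : g * g = 1) :
    (zpowers g : Set G) = {1, g} := by
  ext x
  simp only [SetLike.mem_coe, mem_zpowers_iff, Set.mem_insert_iff, Set.mem_singleton_iff]
  constructor
  · rintro ⟨n, rfl⟩
    obtain ⟨k, rfl | rfl⟩ := Int.even_or_odd' n
    · left
      rw [_root_.zpow_mul, zpow_two, hg, _root_.one_zpow]
    · right
      rw [_root_.zpow_add_one, _root_.zpow_mul, zpow_two, hg, _root_.one_zpow, one_mul]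
  · rintro (rfl | rfl)
    exacts [⟨0, zpow_zero _⟩, ⟨1, zpow_one _⟩]

theorem coe_zpowers_sup_eq_union {N : Subgroup G} {g : G} (hgN : g ∈ normalizer (N : Set G))
    (hg : g * g = 1) : ((zpowers g ⊔ N : Subgroup G) : Set G) = (N : Set G) ∪ (g * ·) '' N := by
  rw [coe_mul_of_left_le_normalizer_right _ _ (zpowers_le.mpr hgN),
    coe_zpowers_of_mul_self_eq_one hg, ← Set.image2_mul, Set.image2_insert_left,
    Set.image2_singleton_left]
  simp only [one_mul, Set.image_id']

theorem relIndex_eq_two_of_coe_eq_union {H K : Subgroup G} {g : G} (hg : g ∉ H)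
    (hK : (K : Set G) = (H : Set G) ∪ (g * ·) '' H) : H.relIndex K = 2 := by
  have hmemK : ∀ {x}, x ∈ K ↔ x ∈ H ∨ ∃ h ∈ H, g * h = x := fun {x} => by
    rw [← SetLike.mem_coe, hK]; rfl
  have hgK : g ∈ K := hmemK.mpr (Or.inr ⟨1, one_mem H, mul_one g⟩)
  have hgg : g * g ∈ H := by
    rcases hmemK.mp (mul_mem hgK hgK) with hgg | ⟨h, hh, hgh⟩
    · exact hgg
    · exact absurd (mul_left_cancel hgh ▸ hh) hg
  refine relIndex_eq_two_iff_exists_notMem_and'.mpr ⟨g, hgK, hg, fun b hb => ?_⟩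
  rcases hmemK.mp hb with hb | ⟨h, hh, rfl⟩
  · exact Or.inr hb
  · exact Or.inl (mul_assoc g g h ▸ mul_mem hgg hh)

theorem card_eq_relIndex_mul_card {H K : Subgroup G} (hHK : H ≤ K) :
    Nat.card K = H.relIndex K * Nat.card H := by
  rw [← relIndex_bot_left, ← relIndex_bot_left, mul_comm,
    relIndex_mul_relIndex ⊥ H K bot_le hHK]

end Subgroup

theorem AddSubgroup.exists_card_closure_eq_prime_pow {p : ℕ} [Fact p.Prime] {M : Type*}
    [AddCommGroup M] [Module (ZMod p) M] {S : Set M} (hS : S.Finite) :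
    ∃ k : ℕ, Nat.card (closure S) = p ^ k := by
  have hspan : closure S = (Submodule.span (ZMod p) S).toAddSubgroup :=
    le_antisymm ((closure_le _).mpr Submodule.subset_span)
      (fun _ hx => (Submodule.span_le (p := toZModSubmodule p (closure S))).mpr
        subset_closure hx)
  have : FiniteDimensional (ZMod p) (Submodule.span (ZMod p) S) :=
    FiniteDimensional.span_of_finite _ hS
  have : Finite (closure S) := hspan ▸ Module.finite_of_finite (ZMod p)
  exact (IsPGroup.iff_card (G := Multiplicative (closure S))).mp
    ZModModule.isPGroup_multiplicative

section MixedGroup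

variable {K : Type*} [Field K] (s : K)

theorem mixedUnipGL_zero : mixedUnipGL s 0 = 1 := by
  ext i j
  fin_cases i <;> fin_cases j <;> simp [mixedUnipGL]

theorem mixedUnipGL_injective : Function.Injective (mixedUnipGL s) := fun α β h => by
  simpa [mixedUnipGL] using
    congr_arg (fun g : GL (Fin 3) K => (g : Matrix (Fin 3) (Fin 3) K) 0 1) h

variable (h2 : (2 : K) ≠ 0)
include h2

theorem mixedUnipGL_mul (α β : K) :
    mixedUnipGL s α * mixedUnipGL s β = mixedUnipGL s (α + β) := by
  ext i j
  fin_cases i <;> fin_cases j <;>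
    simp [mixedUnipGL, Matrix.mul_apply, Fin.sum_univ_three] <;>
    first | ring1 | (field_simp; ring1)

theorem sigmaGL_mul_sigmaGL (a b : K) : sigmaGL s a * sigmaGL s b = mixedUnipGL s (a - b) := by
  ext i j
  fin_cases i <;> fin_cases j <;>
    simp [sigmaGL, mixedUnipGL, Matrix.mul_apply, Fin.sum_univ_three] <;>
    first | ring1 | (field_simp; ring1)

theorem sigmaGL_ne_mixedUnipGL (a α : K) : sigmaGL s a ≠ mixedUnipGL s α := fun h => by
  have h11 := congr_arg (fun g : GL (Fin 3) K => (g : Matrix (Fin 3) (Fin 3) K) 1 1) h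
  simp only [sigmaGL, mixedUnipGL, GeneralLinearGroup.val_mkOfDetNeZero, of_apply, cons_val',
    cons_val_one, cons_val_zero, cons_val_fin_one] at h11
  exact h2 (by linear_combination -h11)

theorem sigmaGL_mul_self (a : K) : sigmaGL s a * sigmaGL s a = 1 := by
  rw [sigmaGL_mul_sigmaGL s h2, sub_self, mixedUnipGL_zero]

theorem sigmaGL_inv (a : K) : (sigmaGL s a)⁻¹ = sigmaGL s a :=
  inv_eq_of_mul_eq_one_right (sigmaGL_mul_self s h2 a)

theorem mixedUnipGL_inv (α : K) : (mixedUnipGL s α)⁻¹ = mixedUnipGL s (-α) :=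
  inv_eq_of_mul_eq_one_right (by rw [mixedUnipGL_mul s h2, add_neg_cancel, mixedUnipGL_zero])

theorem sigmaGL_mul_mixedUnipGL (a α : K) :
    sigmaGL s a * mixedUnipGL s α = sigmaGL s (a - α) :=
  calc sigmaGL s a * mixedUnipGL s α = sigmaGL s a * (sigmaGL s a * sigmaGL s (a - α)) := by
        rw [sigmaGL_mul_sigmaGL s h2, sub_sub_cancel]
    _ = sigmaGL s (a - α) := by rw [← mul_assoc, sigmaGL_mul_self s h2, one_mul]

theorem sigmaGL_conj_mixedUnipGL (a α : K) :
    sigmaGL s a * mixedUnipGL s α * (sigmaGL s a)⁻¹ = mixedUnipGL s (-α) := by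
  rw [sigmaGL_mul_mixedUnipGL s h2, sigmaGL_inv s h2, sigmaGL_mul_sigmaGL s h2,
    sub_sub_cancel_left]

def mixedUnipSubgroup (L : AddSubgroup K) : Subgroup (GL (Fin 3) K) where
  carrier := {g | ∃ α ∈ L, g = mixedUnipGL s α}
  one_mem' := ⟨0, L.zero_mem, (mixedUnipGL_zero s).symm⟩
  mul_mem' := by
    rintro _ _ ⟨α, hα, rfl⟩ ⟨β, hβ, rfl⟩
    exact ⟨α + β, L.add_mem hα hβ, mixedUnipGL_mul s h2 α β⟩
  inv_mem' := by
    rintro _ ⟨α, hα, rfl⟩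
    exact ⟨-α, L.neg_mem hα, mixedUnipGL_inv s h2 α⟩

variable {L : AddSubgroup K}

theorem card_mixedUnipSubgroup : Nat.card (mixedUnipSubgroup s h2 L) = Nat.card L := by
  refine (Nat.card_congr (Equiv.ofBijective
    (fun α : L => (⟨mixedUnipGL s α, α, α.2, rfl⟩ : mixedUnipSubgroup s h2 L)) ⟨?_, ?_⟩)).symm
  · exact fun α β h => Subtype.ext (mixedUnipGL_injective s (congr_arg Subtype.val h))
  · rintro ⟨_, α, hα, rfl⟩
    exact ⟨⟨α, hα⟩, rfl⟩

theorem sigmaGL_notMem_mixedUnipSubgroup (a : K) : sigmaGL s a ∉ mixedUnipSubgroup s h2 L :=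
  fun ⟨α, _, h⟩ => sigmaGL_ne_mixedUnipGL s h2 a α h

theorem sigmaGL_mem_normalizer_mixedUnipSubgroup (a : K) :
    sigmaGL s a ∈ Subgroup.normalizer (mixedUnipSubgroup s h2 L : Set (GL (Fin 3) K)) := by
  have hconj : ∀ g ∈ mixedUnipSubgroup s h2 L,
      sigmaGL s a * g * (sigmaGL s a)⁻¹ ∈ mixedUnipSubgroup s h2 L := by
    rintro _ ⟨α, hα, rfl⟩
    exact ⟨-α, L.neg_mem hα, sigmaGL_conj_mixedUnipGL s h2 a α⟩
  have hconj' : ∀ g ∈ mixedUnipSubgroup s h2 L,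
      (sigmaGL s a)⁻¹ * g * sigmaGL s a ∈ mixedUnipSubgroup s h2 L := by
    simpa only [sigmaGL_inv s h2] using hconj
  exact Subgroup.mem_normalizer_iff.mpr fun g =>
    ⟨hconj g, fun hg => by simpa [mul_assoc] using hconj' _ hg⟩

theorem mixedUnipSubgroup_closure_le {S : Set K} {H : Subgroup (GL (Fin 3) K)}
    (hS : ∀ d ∈ S, mixedUnipGL s d ∈ H) : mixedUnipSubgroup s h2 (AddSubgroup.closure S) ≤ H := by
  rintro _ ⟨α, hα, rfl⟩
  induction hα using AddSubgroup.closure_induction with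
  | mem d hd => exact hS d hd
  | zero => exact mixedUnipGL_zero s ▸ H.one_mem
  | add α β _ _ hα hβ => exact mixedUnipGL_mul s h2 α β ▸ H.mul_mem hα hβ
  | neg α _ hα => exact mixedUnipGL_inv s h2 α ▸ H.inv_mem hα

theorem closure_sigmaGL_eq_zpowers_sup {ι : Type*} (c : ι → K) (i₀ : ι) :
    Subgroup.closure (Set.range fun i => sigmaGL s (c i)) =
      Subgroup.zpowers (sigmaGL s (c i₀)) ⊔
        mixedUnipSubgroup s h2 (AddSubgroup.closure {d | ∃ i j, d = c i - c j}) := by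
  apply le_antisymm
  · rw [Subgroup.closure_le]
    rintro _ ⟨i, rfl⟩
    have hσ : sigmaGL s (c i) = sigmaGL s (c i₀) * mixedUnipGL s (c i₀ - c i) := by
      rw [sigmaGL_mul_mixedUnipGL s h2, sub_sub_cancel]
    simp only [SetLike.mem_coe, hσ]
    exact mul_mem (Subgroup.mem_sup_left (Subgroup.mem_zpowers _))
      (Subgroup.mem_sup_right ⟨_, AddSubgroup.subset_closure ⟨i₀, i, rfl⟩, rfl⟩)
  · refine sup_le (Subgroup.zpowers_le.mpr (Subgroup.subset_closure ⟨i₀, rfl⟩)) ?_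
    refine mixedUnipSubgroup_closure_le s h2 ?_
    rintro _ ⟨i, j, rfl⟩
    rw [← sigmaGL_mul_sigmaGL s h2]
    exact mul_mem (Subgroup.subset_closure ⟨i, rfl⟩) (Subgroup.subset_closure ⟨j, rfl⟩)

end MixedGroup

theorem structure_of_mixed_group_general {K : Type*} [Field K] {p : ℕ}
    (hp : p.Prime) (hodd : Odd p) [CharP K p]
    (s : K) (t : ℕ) (ht : 0 < t) (c : Fin t → K)
    (A : Subgroup (GL (Fin 3) K))
    (hA : A = Subgroup.closure (Set.range fun i : Fin t => sigmaGL s (c i)))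
    (Kgrp : AddSubgroup K)
    (hK : Kgrp = AddSubgroup.closure {d : K | ∃ i j : Fin t, d = c i - c j}) :
    (∀ i j : Fin t, ((sigmaGL s (c i) * sigmaGL s (c j) : GL (Fin 3) K) :
        Matrix (Fin 3) (Fin 3) K) =
      !![1, c i - c j, (c i - c j) * (c i - c j - s) / 2; 0, 1, c i - c j; 0, 0, 1]) ∧
    ∃ A_K : Subgroup (GL (Fin 3) K),
      ((A_K : Set (GL (Fin 3) K)) = {g : GL (Fin 3) K | ∃ α ∈ Kgrp, g = mixedUnipGL s α}) ∧
      A_K ≤ A ∧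
      A_K.relIndex A = 2 ∧
      ((A : Set (GL (Fin 3) K)) =
        (A_K : Set (GL (Fin 3) K)) ∪
          (fun x => sigmaGL s (c ⟨0, ht⟩) * x) '' (A_K : Set (GL (Fin 3) K))) ∧
      Nat.card A = 2 * Nat.card Kgrp ∧
      ∃ k : ℕ, Nat.card Kgrp = p ^ k := by
  have h2 : (2 : K) ≠ 0 := Ring.two_ne_zero <| by
    rw [ringChar.eq K p]
    rintro rfl
    exact Nat.not_even_iff_odd.mpr hodd even_two
  have hAsup := closure_sigmaGL_eq_zpowers_sup s h2 c ⟨0, ht⟩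
  rw [← hA, ← hK] at hAsup
  have hunion : (A : Set (GL (Fin 3) K)) = (mixedUnipSubgroup s h2 Kgrp : Set _) ∪
      (sigmaGL s (c ⟨0, ht⟩) * ·) '' mixedUnipSubgroup s h2 Kgrp := by
    rw [hAsup, Subgroup.coe_zpowers_sup_eq_union
      (sigmaGL_mem_normalizer_mixedUnipSubgroup s h2 _) (sigmaGL_mul_self s h2 _)]
  have hle : mixedUnipSubgroup s h2 Kgrp ≤ A := hAsup ▸ le_sup_right
  have hrel := Subgroup.relIndex_eq_two_of_coe_eq_union
    (sigmaGL_notMem_mixedUnipSubgroup s h2 _) hunion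
  refine ⟨fun i j => by rw [sigmaGL_mul_sigmaGL s h2]; rfl,
    mixedUnipSubgroup s h2 Kgrp, rfl, hle, hrel, hunion, ?_, ?_⟩
  · rw [Subgroup.card_eq_relIndex_mul_card hle, hrel, card_mixedUnipSubgroup]
  · have : Fact p.Prime := ⟨hp⟩
    let := ZMod.algebra K p
    have hfin : {d : K | ∃ i j : Fin t, d = c i - c j}.Finite :=
      (Set.finite_range fun ij : Fin t × Fin t => c ij.1 - c ij.2).subset
        (by rintro _ ⟨i, j, rfl⟩; exact ⟨(i, j), rfl⟩)
    exact hK ▸ AddSubgroup.exists_card_closure_eq_prime_pow hfin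

/-- Structure of the group `A = ⟨σ₁, …, σ_t⟩` of mixed pseudoreflections:
`σᵢσⱼ` is the displayed unipotent matrix, `A_K` is a subgroup of `A` of index 2,
`A = A_K ∪ σ₁A_K`, and `|A| = 2|K| = 2pᵏ`. -/
theorem structure_of_mixed_group {K : Type*} [Field K] [IsAlgClosed K] {p : ℕ}
    (hp : p.Prime) (hodd : Odd p) [CharP K p]
    (s : K) (t : ℕ) (ht : 0 < t) (c : Fin t → K)
    (A : Subgroup (GL (Fin 3) K))
    (hA : A = Subgroup.closure (Set.range fun i : Fin t => sigmaGL s (c i)))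
    (Kgrp : AddSubgroup K)
    (hK : Kgrp = AddSubgroup.closure {d : K | ∃ i j : Fin t, d = c i - c j}) :
    (∀ i j : Fin t, ((sigmaGL s (c i) * sigmaGL s (c j) : GL (Fin 3) K) :
        Matrix (Fin 3) (Fin 3) K) =
      !![1, c i - c j, (c i - c j) * (c i - c j - s) / 2; 0, 1, c i - c j; 0, 0, 1]) ∧
    ∃ A_K : Subgroup (GL (Fin 3) K),
      ((A_K : Set (GL (Fin 3) K)) = {g : GL (Fin 3) K | ∃ α ∈ Kgrp, g = mixedUnipGL s α}) ∧
      A_K ≤ A ∧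
      A_K.relIndex A = 2 ∧
      ((A : Set (GL (Fin 3) K)) =
        (A_K : Set (GL (Fin 3) K)) ∪
          (fun x => sigmaGL s (c ⟨0, ht⟩) * x) '' (A_K : Set (GL (Fin 3) K))) ∧
      Nat.card A = 2 * Nat.card Kgrp ∧
      ∃ k : ℕ, Nat.card Kgrp = p ^ k :=
  structure_of_mixed_group_general hp hodd s t ht c A hA Kgrp hK
end
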